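/- Let g : R → R be (1/q)-Lipschitz and 0 < ε ≤ 1. Then T(H_ε(g)) is the disjoint union over residue classes s ∈ F of sets H_{(|a|/q)ε}(g^s), where each g^s : R → R is (1/q)-Lipschitz with values in D_{1/q}(s). In other words, T maps a horizontal ε-tube bijectively onto q horizontal tubes of the much smaller radius |a|ε/q, one in each horizontal strip R × D_{1/q}(s). -/

import Mathlib

/-!
Write `psi t = b (t ^ q - t) + a g t`, so that `T (t, g t + θ) = (psi t + a θ, t)`. Since the
residue field has `q` elements, `t ^ q ≡ t` modulo the maximal ideal and `t ↦ t ^ q` contracts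
each residue disc by the factor `1/q`; hence `psi` stretches each residue disc `D_{1/q}(s)` by
exactly `q` onto `R` (surjectivity by the contraction mapping theorem). Its inverse branches `g^s` are therefore `1/q`-Lipschitz,
and `T (t, g t + θ)` with `t ∈ D_{1/q}(s)` lies at horizontal distance `|a θ| / q` from the graph
of `g^s`.
-/

open scoped Classical
open MeasureTheory Filter

noncomputable section

/-- A complete, locally compact non-Archimedean field with residue field of
order `q`, absolute value normalized so that a uniformizer has norm `1/q`.
`reps` is a set of `q` coset representatives for the residue field: they cover
the ring of integers by discs of radius `1/q` and are pairwise at distance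
`> 1/q`. -/
structure NAField (K : Type*) [NormedField K] where
  na : IsNonarchimedean (fun x : K => ‖x‖)
  complete : CompleteSpace K
  locCompact : LocallyCompactSpace K
  q : ℕ
  one_lt_q : 1 < q
  valGroup : ∀ x : K, x ≠ 0 → ∃ n : ℤ, ‖x‖ = (q : ℝ) ^ n
  exists_unif : ∃ ϖ : K, ‖ϖ‖ = (q : ℝ)⁻¹
  reps : Finset K
  card_reps : reps.card = q
  norm_reps : ∀ s ∈ reps, ‖s‖ ≤ 1
  reps_cover : ∀ x : K, ‖x‖ ≤ 1 → ∃ s ∈ reps, ‖x - s‖ ≤ (q : ℝ)⁻¹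
  reps_sep : ∀ s ∈ reps, ∀ t ∈ reps, s ≠ t → (q : ℝ)⁻¹ < ‖s - t‖

variable {K : Type*} [NormedField K]

/-- `f : R → R` is `(1/q)`-Lipschitz on the ring of integers. -/
def NAField.IsLip (F : NAField K) (f : K → K) : Prop :=
  (∀ t : K, ‖t‖ ≤ 1 → ‖f t‖ ≤ 1) ∧
  ∀ t₁ t₂ : K, ‖t₁‖ ≤ 1 → ‖t₂‖ ≤ 1 → ‖f t₁ - f t₂‖ ≤ ((F.q : ℝ))⁻¹ * ‖t₁ - t₂‖

/-- The unit polydisc `R² ⊆ K²`. -/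
def unitPoly (K : Type*) [NormedField K] : Set (K × K) := {p | ‖p.1‖ ≤ 1 ∧ ‖p.2‖ ≤ 1}

/-- Horizontal `δ`-neighborhood `H_δ(f) = {(t, f t + θ) : t ∈ R, |θ| ≤ δ}`. -/
def Hnbhd (f : K → K) (δ : ℝ) : Set (K × K) :=
  {p | ∃ t θ : K, ‖t‖ ≤ 1 ∧ ‖θ‖ ≤ δ ∧ p = (t, f t + θ)}

/-- Vertical `δ`-neighborhood `V_δ(f) = {(f t + θ, t) : t ∈ R, |θ| ≤ δ}`. -/
def Vnbhd (f : K → K) (δ : ℝ) : Set (K × K) :=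
  {p | ∃ t θ : K, ‖t‖ ≤ 1 ∧ ‖θ‖ ≤ δ ∧ p = (f t + θ, t)}

/-- The automorphism `T(x,y) = (a y + b (x^q - x), x)`. -/
def NAField.Tmap (F : NAField K) (a b : K) : K × K → K × K :=
  fun p => (a * p.2 + b * (p.1 ^ F.q - p.1), p.1)

/-- The inverse automorphism `T⁻¹(x,y) = (y, a⁻¹ (x - b (y^q - y)))`. -/
def NAField.Tinv (F : NAField K) (a b : K) : K × K → K × K :=
  fun p => (p.2, a⁻¹ * (p.1 - b * (p.2 ^ F.q - p.2)))

/-- The attractor `A_T = ⋂_{n ≥ 1} Tⁿ(R²)`. -/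
def NAField.Attractor (F : NAField K) (a b : K) : Set (K × K) :=
  ⋂ n ∈ {n : ℕ | 1 ≤ n}, (F.Tmap a b)^[n] '' unitPoly K

/-- The basin of attraction `B_T = ⋃_{n ≥ 1} T⁻ⁿ(R²)`. -/
def NAField.Basin (F : NAField K) (a b : K) : Set (K × K) :=
  ⋃ n ∈ {n : ℕ | 1 ≤ n}, (F.Tmap a b)^[n] ⁻¹' unitPoly K

/-- `T^k` for `k : ℤ`. -/
def NAField.iterZ (F : NAField K) (a b : K) (k : ℤ) : K × K → K × K :=
  if 0 ≤ k then (F.Tmap a b)^[k.toNat] else (F.Tinv a b)^[(-k).toNat]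

/-- The image under the conjugacy `ω` of the cylinder set of bisequences
agreeing with `s` on coordinates `-M, …, M`: points of the attractor whose
itinerary through the residue strips matches `s` on those coordinates. -/
def NAField.Cyl (F : NAField K) (a b : K) (s : ℤ → K) (M : ℕ) : Set (K × K) :=
  {p | p ∈ F.Attractor a b ∧
    ∀ k : ℤ, |k| ≤ (M : ℤ) → ‖(F.iterZ a b k p).1 - s k‖ ≤ ((F.q : ℝ))⁻¹}

open Metric IsUltrametricDist IsLocalRing
open scoped NNReal

theorem exists_fixedPoint_of_mapsTo_closedBall {X : Type*} [MetricSpace X] [CompleteSpace X]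
    {f : X → X} {c : X} {r : ℝ} (hr : 0 ≤ r) {L : ℝ≥0} (hL : L < 1)
    (hmaps : Set.MapsTo f (closedBall c r) (closedBall c r))
    (hf : LipschitzOnWith L f (closedBall c r)) : ∃ x ∈ closedBall c r, f x = x := by
  obtain ⟨x, hx, hfix, -⟩ := ContractingWith.exists_fixedPoint' isClosed_closedBall.isComplete
    hmaps ⟨hL, hf.mapsToRestrict hmaps⟩ (mem_closedBall_self hr) (edist_ne_top _ _)
  exact ⟨x, hx, hfix⟩

theorem disjoint_closedBall_of_lt_dist {X : Type*} [PseudoMetricSpace X] [IsUltrametricDist X]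
    {x y : X} {r : ℝ} (h : r < dist x y) : Disjoint (closedBall x r) (closedBall y r) :=
  Set.disjoint_left.mpr fun _ hx hy => h.not_ge <|
    (IsUltrametricDist.dist_triangle_max x _ y).trans (max_le (mem_closedBall'.mp hx) hy)

section Ultrametric

theorem norm_sub_le_max {S : Type*} [SeminormedAddGroup S] [IsUltrametricDist S] (x y : S) :
    ‖x - y‖ ≤ max ‖x‖ ‖y‖ := by
  simpa [sub_eq_add_neg] using norm_add_le_max x (-y)

theorem norm_add_eq_left_of_norm_lt {S : Type*} [SeminormedAddGroup S] [IsUltrametricDist S]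
    {x y : S} (h : ‖y‖ < ‖x‖) : ‖x + y‖ = ‖x‖ := by
  rw [norm_add_eq_max_of_norm_ne_norm h.ne', max_eq_left h.le]

theorem norm_sub_eq_left_of_norm_lt {S : Type*} [SeminormedAddGroup S] [IsUltrametricDist S]
    {x y : S} (h : ‖y‖ < ‖x‖) : ‖x - y‖ = ‖x‖ := by
  rw [sub_eq_add_neg, norm_add_eq_left_of_norm_lt (by rwa [norm_neg])]

variable {K : Type*} [NormedField K] [IsUltrametricDist K]

variable (K) in
abbrev integerRing : ValuationSubring K := (NormedField.valuation (K := K)).valuationSubring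

theorem mem_integerRing_iff {x : K} : x ∈ integerRing K ↔ ‖x‖ ≤ 1 := by
  simp [Valuation.mem_valuationSubring_iff, ← NNReal.coe_le_coe]

theorem residue_eq_zero_iff_norm_lt_one (x : integerRing K) :
    residue (integerRing K) x = 0 ↔ ‖(x : K)‖ < 1 := by
  rw [residue_eq_zero_iff, mem_maximalIdeal, mem_nonunits_iff]
  exact Valuation.Integer.not_isUnit_iff_valuation_lt_one (x := x)

theorem residue_eq_residue_iff (x y : integerRing K) :
    residue (integerRing K) x = residue (integerRing K) y ↔ ‖(x : K) - y‖ < 1 := by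
  rw [← sub_eq_zero, ← map_sub, residue_eq_zero_iff_norm_lt_one]
  rfl

theorem norm_sub_le_of_mem_closedBall {x y s : K} {r : ℝ} (hx : x ∈ closedBall s r)
    (hy : y ∈ closedBall s r) : ‖x - y‖ ≤ r := by
  rw [← dist_eq_norm]
  exact (IsUltrametricDist.dist_triangle_max x s y).trans (max_le hx (mem_closedBall'.mp hy))

theorem norm_le_one_of_mem_closedBall {x s : K} {r : ℝ} (hs : ‖s‖ ≤ 1) (hr : r ≤ 1)
    (hx : x ∈ closedBall s r) : ‖x‖ ≤ 1 := by
  rw [← sub_add_cancel x s]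
  exact (norm_add_le_max _ _).trans (max_le ((mem_closedBall_iff_norm.mp hx).trans hr) hs)

theorem Hnbhd_subset_snd_preimage {f : K → K} {s : K} {r δ : ℝ}
    (hf : ∀ t, ‖t‖ ≤ 1 → f t ∈ closedBall s r) (hδ : δ ≤ r) :
    Hnbhd f δ ⊆ Prod.snd ⁻¹' closedBall s r := by
  rintro _ ⟨t, θ, ht, hθ, rfl⟩
  rw [Set.mem_preimage, mem_closedBall_iff_norm, add_sub_right_comm]
  exact (norm_add_le_max _ _).trans (max_le (mem_closedBall_iff_norm.mp (hf t ht)) (hθ.trans hδ))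

end Ultrametric

namespace NAField

variable {K : Type*} [NormedField K] (F : NAField K)

theorem isUltrametricDist (F : NAField K) : IsUltrametricDist K :=
  .isUltrametricDist_of_isNonarchimedean_norm F.na

theorem one_lt_cast_q : (1 : ℝ) < F.q := mod_cast F.one_lt_q

theorem cast_q_pos : (0 : ℝ) < F.q := one_pos.trans F.one_lt_cast_q

theorem inv_q_pos : (0 : ℝ) < (F.q : ℝ)⁻¹ := inv_pos.mpr F.cast_q_pos

theorem inv_q_lt_one : (F.q : ℝ)⁻¹ < 1 := inv_lt_one_of_one_lt₀ F.one_lt_cast_q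

theorem norm_le_inv_q_of_norm_lt_one {x : K} (hx : ‖x‖ < 1) : ‖x‖ ≤ (F.q : ℝ)⁻¹ := by
  rcases eq_or_ne x 0 with rfl | hx0
  · simp [F.inv_q_pos.le]
  obtain ⟨n, hn⟩ := F.valGroup x hx0
  rw [hn] at hx ⊢
  have hn : n ≤ -1 := by
    by_contra! h
    exact hx.not_ge (one_le_zpow₀ F.one_lt_cast_q.le (by omega))
  simpa using zpow_le_zpow_right₀ F.one_lt_cast_q.le hn

def psi (a b : K) (g : K → K) (t : K) : K := b * (t ^ F.q - t) + a * g t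

theorem Tmap_graph (a b : K) (g : K → K) (t θ : K) :
    F.Tmap a b (t, g t + θ) = (F.psi a b g t + a * θ, t) := by
  simp only [Tmap, psi, Prod.mk.injEq, and_true]
  ring

theorem leftInverse_Tinv_Tmap {a : K} (ha : a ≠ 0) (b : K) :
    Function.LeftInverse (F.Tinv a b) (F.Tmap a b) := by
  intro p
  simp only [Tinv, Tmap]
  ext
  · rfl
  · field_simp
    ring

variable [IsUltrametricDist K]

theorem bijective_residue_reps :
    Function.Bijective fun s : F.reps =>
      residue (integerRing K) ⟨s, mem_integerRing_iff.mpr (F.norm_reps s s.2)⟩ := by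
  constructor
  · rintro ⟨s, hs⟩ ⟨t, ht⟩ hst
    by_contra hne
    have hlt : ‖s - t‖ < 1 := (residue_eq_residue_iff _ _).mp hst
    exact (F.norm_le_inv_q_of_norm_lt_one hlt).not_gt
      (F.reps_sep s hs t ht fun h => hne (Subtype.ext h))
  · intro y
    obtain ⟨x, rfl⟩ := residue_surjective y
    obtain ⟨s, hs, hxs⟩ := F.reps_cover x (mem_integerRing_iff.mp x.2)
    refine ⟨⟨s, hs⟩, (residue_eq_residue_iff _ _).mpr ?_⟩
    rw [norm_sub_rev]
    exact hxs.trans_lt F.inv_q_lt_one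

theorem natCard_residueField : Nat.card (ResidueField (integerRing K)) = F.q := by
  rw [← Nat.card_eq_of_bijective _ F.bijective_residue_reps, Nat.card_eq_fintype_card,
    Fintype.card_coe, F.card_reps]

theorem finite_residueField (F : NAField K) : Finite (ResidueField (integerRing K)) :=
  Nat.finite_of_card_ne_zero (F.natCard_residueField ▸ (zero_lt_one.trans F.one_lt_q).ne')

theorem residue_pow_q (x : ResidueField (integerRing K)) : x ^ F.q = x := by
  have := F.finite_residueField
  have := Fintype.ofFinite (ResidueField (integerRing K))
  rw [← F.natCard_residueField, Nat.card_eq_fintype_card, FiniteField.pow_card]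

theorem residue_cast_q : (F.q : ResidueField (integerRing K)) = 0 := by
  have := F.finite_residueField
  have := Fintype.ofFinite (ResidueField (integerRing K))
  rw [← F.natCard_residueField, Nat.card_eq_fintype_card, Nat.cast_card_eq_zero]

theorem norm_le_inv_q_of_residue_eq_zero {x : integerRing K}
    (hx : residue (integerRing K) x = 0) : ‖(x : K)‖ ≤ (F.q : ℝ)⁻¹ :=
  F.norm_le_inv_q_of_norm_lt_one ((residue_eq_zero_iff_norm_lt_one x).mp hx)

theorem norm_pow_q_sub_self_le {t : K} (ht : ‖t‖ ≤ 1) : ‖t ^ F.q - t‖ ≤ (F.q : ℝ)⁻¹ := by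
  set x : integerRing K := ⟨t, mem_integerRing_iff.mpr ht⟩
  have hx : residue (integerRing K) (x ^ F.q - x) = 0 := by
    rw [map_sub, map_pow, F.residue_pow_q, sub_self]
  exact F.norm_le_inv_q_of_residue_eq_zero hx

theorem norm_pow_q_sub_pow_q_le {t u : K} (ht : ‖t‖ ≤ 1) (hu : ‖u‖ ≤ 1) (htu : ‖t - u‖ < 1) :
    ‖t ^ F.q - u ^ F.q‖ ≤ (F.q : ℝ)⁻¹ * ‖t - u‖ := by
  set x : integerRing K := ⟨t, mem_integerRing_iff.mpr ht⟩
  set y : integerRing K := ⟨u, mem_integerRing_iff.mpr hu⟩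
  have hxy : residue (integerRing K) x = residue (integerRing K) y :=
    (residue_eq_residue_iff x y).mpr htu
  have hsum :
      residue (integerRing K) (∑ i ∈ Finset.range F.q, x ^ i * y ^ (F.q - 1 - i)) = 0 := by
    simp only [map_sum, map_mul, map_pow, hxy, geom_sum₂_self, F.residue_cast_q, zero_mul]
  have hfactor :
      t ^ F.q - u ^ F.q = (∑ i ∈ Finset.range F.q, t ^ i * u ^ (F.q - 1 - i)) * (t - u) :=
    (geom_sum₂_mul t u F.q).symm
  rw [hfactor, norm_mul]
  gcongr
  simpa using F.norm_le_inv_q_of_residue_eq_zero hsum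

variable {F} {a b : K} {g : K → K}

theorem norm_psi_le_one (ha : ‖a‖ ≤ 1) (hb : ‖b‖ = F.q) (hg : F.IsLip g) {t : K}
    (ht : ‖t‖ ≤ 1) : ‖F.psi a b g t‖ ≤ 1 := by
  refine (norm_add_le_max _ _).trans (max_le ?_ ?_)
  · rw [norm_mul, hb, ← mul_inv_cancel₀ F.cast_q_pos.ne']
    gcongr
    exact F.norm_pow_q_sub_self_le ht
  · rw [norm_mul]
    exact mul_le_one₀ ha (norm_nonneg _) (hg.1 t ht)

/-- On a residue disc `t ↦ t ^ q` contracts, so `b (t ^ q - t)` stretches distances by exactly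
`‖b‖ = q`, and `a g` is too small to interfere. -/
theorem norm_psi_sub_psi (ha : ‖a‖ ≤ 1) (hb : ‖b‖ = F.q) (hg : F.IsLip g) {t u : K}
    (ht : ‖t‖ ≤ 1) (hu : ‖u‖ ≤ 1) (htu : ‖t - u‖ < 1) :
    ‖F.psi a b g t - F.psi a b g u‖ = F.q * ‖t - u‖ := by
  rcases eq_or_ne t u with rfl | hne
  · simp
  have hpos : 0 < ‖t - u‖ := norm_pos_iff.mpr (sub_ne_zero.mpr hne)
  have hpow : ‖t ^ F.q - u ^ F.q‖ < ‖t - u‖ :=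
    (F.norm_pow_q_sub_pow_q_le ht hu htu).trans_lt (mul_lt_of_lt_one_left hpos F.inv_q_lt_one)
  have hlin : ‖b * ((t ^ F.q - u ^ F.q) - (t - u))‖ = F.q * ‖t - u‖ := by
    rw [norm_mul, hb, norm_sub_rev, norm_sub_eq_left_of_norm_lt hpow]
  have hg' : ‖a * (g t - g u)‖ < F.q * ‖t - u‖ :=
    calc ‖a * (g t - g u)‖ ≤ 1 * ((F.q : ℝ)⁻¹ * ‖t - u‖) := by
          rw [norm_mul]; exact mul_le_mul ha (hg.2 t u ht hu) (norm_nonneg _) zero_le_one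
      _ < F.q * ‖t - u‖ := by
          rw [one_mul]; gcongr; exact F.inv_q_lt_one.trans F.one_lt_cast_q
  have hsplit :
      F.psi a b g t - F.psi a b g u = b * ((t ^ F.q - u ^ F.q) - (t - u)) + a * (g t - g u) := by
    simp only [psi]; ring
  rw [hsplit, norm_add_eq_left_of_norm_lt (hlin ▸ hg'), hlin]

/-- Fixed points of `y ↦ y + (psi y - u) / b = y ^ q + (a g y - u) / b`, which contracts the
residue disc around `s` by the factor `1/q`, solve `psi y = u`. -/
theorem exists_psi_eq [CompleteSpace K] (ha : ‖a‖ ≤ 1) (hb : ‖b‖ = F.q) (hg : F.IsLip g)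
    {s u : K} (hs : ‖s‖ ≤ 1) (hu : ‖u‖ ≤ 1) :
    ∃ t ∈ closedBall s (F.q : ℝ)⁻¹, F.psi a b g t = u := by
  have hb0 : b ≠ 0 := norm_pos_iff.mp (hb ▸ F.cast_q_pos)
  have hbinv : ‖b⁻¹‖ = (F.q : ℝ)⁻¹ := by rw [norm_inv, hb]
  set f : K → K := fun y => y ^ F.q + b⁻¹ * (a * g y - u)
  have hf : ∀ y, f y = y + b⁻¹ * (F.psi a b g y - u) := fun y => by
    simp only [f, psi]; field_simp; ring
  have hR : ∀ y ∈ closedBall s (F.q : ℝ)⁻¹, ‖y‖ ≤ 1 := fun y =>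
    norm_le_one_of_mem_closedBall hs F.inv_q_lt_one.le
  have hmaps : Set.MapsTo f (closedBall s (F.q : ℝ)⁻¹) (closedBall s (F.q : ℝ)⁻¹) := by
    intro y hy
    rw [mem_closedBall_iff_norm, hf, add_sub_right_comm]
    refine (norm_add_le_max _ _).trans (max_le (mem_closedBall_iff_norm.mp hy) ?_)
    rw [norm_mul, hbinv]
    refine mul_le_of_le_one_right F.inv_q_pos.le ?_
    exact (norm_sub_le_max _ _).trans (max_le (norm_psi_le_one ha hb hg (hR y hy)) hu)
  have hlip : LipschitzOnWith (F.q : ℝ≥0)⁻¹ f (closedBall s (F.q : ℝ)⁻¹) := by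
    refine LipschitzOnWith.of_dist_le_mul fun y hy z hz => ?_
    rw [dist_eq_norm, dist_eq_norm, NNReal.coe_inv, NNReal.coe_natCast]
    have hyz : ‖y - z‖ < 1 := (norm_sub_le_of_mem_closedBall hy hz).trans_lt F.inv_q_lt_one
    have : f y - f z = (y ^ F.q - z ^ F.q) + b⁻¹ * a * (g y - g z) := by simp only [f]; ring
    rw [this]
    refine (norm_add_le_max _ _).trans
      (max_le (F.norm_pow_q_sub_pow_q_le (hR y hy) (hR z hz) hyz) ?_)
    rw [norm_mul, norm_mul, hbinv]
    calc (F.q : ℝ)⁻¹ * ‖a‖ * ‖g y - g z‖ ≤ 1 * 1 * ((F.q : ℝ)⁻¹ * ‖y - z‖) := by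
          gcongr
          · exact F.inv_q_lt_one.le
          · exact hg.2 y z (hR y hy) (hR z hz)
      _ = (F.q : ℝ)⁻¹ * ‖y - z‖ := by ring
  have := F.complete
  obtain ⟨t, ht, hfix⟩ := exists_fixedPoint_of_mapsTo_closedBall F.inv_q_pos.le
    (inv_lt_one_of_one_lt₀ (mod_cast F.one_lt_q)) hmaps hlip
  refine ⟨t, ht, ?_⟩
  rw [hf, add_eq_left, mul_eq_zero, sub_eq_zero] at hfix
  exact hfix.resolve_left (inv_ne_zero hb0)

/-- The inverse of `psi` on the residue disc around `s`; this is the paper's `g^s`. -/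
def branch (F : NAField K) (a b : K) (g : K → K) (s : K) : K → K :=
  Function.invFunOn (F.psi a b g) (closedBall s (F.q : ℝ)⁻¹)

variable [CompleteSpace K] {s : K}

theorem branch_mem_closedBall (ha : ‖a‖ ≤ 1) (hb : ‖b‖ = F.q) (hg : F.IsLip g) (hs : ‖s‖ ≤ 1)
    {u : K} (hu : ‖u‖ ≤ 1) : F.branch a b g s u ∈ closedBall s (F.q : ℝ)⁻¹ :=
  Function.invFunOn_mem (exists_psi_eq ha hb hg hs hu)

theorem psi_branch (ha : ‖a‖ ≤ 1) (hb : ‖b‖ = F.q) (hg : F.IsLip g) (hs : ‖s‖ ≤ 1)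
    {u : K} (hu : ‖u‖ ≤ 1) : F.psi a b g (F.branch a b g s u) = u :=
  Function.invFunOn_eq (exists_psi_eq ha hb hg hs hu)

theorem norm_sub_branch (ha : ‖a‖ ≤ 1) (hb : ‖b‖ = F.q) (hg : F.IsLip g) (hs : ‖s‖ ≤ 1)
    {t u : K} (ht : t ∈ closedBall s (F.q : ℝ)⁻¹) (hu : ‖u‖ ≤ 1) :
    ‖t - F.branch a b g s u‖ = (F.q : ℝ)⁻¹ * ‖F.psi a b g t - u‖ := by
  have hbr := branch_mem_closedBall ha hb hg hs hu
  have hR : ∀ y ∈ closedBall s (F.q : ℝ)⁻¹, ‖y‖ ≤ 1 := fun y =>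
    norm_le_one_of_mem_closedBall hs F.inv_q_lt_one.le
  have := norm_psi_sub_psi ha hb hg (hR t ht) (hR _ hbr)
    ((norm_sub_le_of_mem_closedBall ht hbr).trans_lt F.inv_q_lt_one)
  rw [psi_branch ha hb hg hs hu] at this
  rw [this, inv_mul_cancel_left₀ F.cast_q_pos.ne']

theorem isLip_branch (ha : ‖a‖ ≤ 1) (hb : ‖b‖ = F.q) (hg : F.IsLip g) (hs : ‖s‖ ≤ 1) :
    F.IsLip (F.branch a b g s) := by
  refine ⟨fun u hu => norm_le_one_of_mem_closedBall hs F.inv_q_lt_one.le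
    (branch_mem_closedBall ha hb hg hs hu), fun u₁ u₂ hu₁ hu₂ => ?_⟩
  rw [norm_sub_branch ha hb hg hs (branch_mem_closedBall ha hb hg hs hu₁) hu₂,
    psi_branch ha hb hg hs hu₁]

theorem Hnbhd_branch_subset (ha : ‖a‖ ≤ 1) (hb : ‖b‖ = F.q) (hg : F.IsLip g) (hs : ‖s‖ ≤ 1)
    {δ : ℝ} (hδ : δ ≤ (F.q : ℝ)⁻¹) :
    Hnbhd (F.branch a b g s) δ ⊆ Prod.snd ⁻¹' closedBall s (F.q : ℝ)⁻¹ :=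
  Hnbhd_subset_snd_preimage (fun _ => branch_mem_closedBall ha hb hg hs) hδ

theorem disjoint_Hnbhd_branch (ha : ‖a‖ ≤ 1) (hb : ‖b‖ = F.q) (hg : F.IsLip g) {s s' : K}
    (hs : s ∈ F.reps) (hs' : s' ∈ F.reps) (hne : s ≠ s') {δ : ℝ} (hδ : δ ≤ (F.q : ℝ)⁻¹) :
    Disjoint (Hnbhd (F.branch a b g s) δ) (Hnbhd (F.branch a b g s') δ) := by
  have hballs := disjoint_closedBall_of_lt_dist ((F.reps_sep s hs s' hs' hne).trans_eq
    (dist_eq_norm s s').symm)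
  exact (hballs.preimage Prod.snd).mono (Hnbhd_branch_subset ha hb hg (F.norm_reps s hs) hδ)
    (Hnbhd_branch_subset ha hb hg (F.norm_reps s' hs') hδ)

theorem Tmap_image_Hnbhd_subset (ha : ‖a‖ ≤ 1) (hb : ‖b‖ = F.q) (hg : F.IsLip g) {ε : ℝ}
    (hε : ε ≤ 1) :
    F.Tmap a b '' Hnbhd g ε ⊆ ⋃ s ∈ F.reps, Hnbhd (F.branch a b g s) (‖a‖ / F.q * ε) := by
  rintro _ ⟨_, ⟨t, θ, ht, hθ, rfl⟩, rfl⟩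
  rw [Tmap_graph]
  obtain ⟨s, hs, hts⟩ := F.reps_cover t ht
  have haθ : ‖a * θ‖ ≤ ‖a‖ * ε := by
    rw [norm_mul]; exact mul_le_mul_of_nonneg_left hθ (norm_nonneg a)
  set u := F.psi a b g t + a * θ
  have hu : ‖u‖ ≤ 1 := by
    refine (norm_add_le_max _ _).trans (max_le (norm_psi_le_one ha hb hg ht) ?_)
    rw [norm_mul]
    exact (mul_le_of_le_one_left (norm_nonneg θ) ha).trans (hθ.trans hε)
  refine Set.mem_iUnion₂.mpr ⟨s, hs, u, t - F.branch a b g s u, hu, ?_, by simp⟩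
  rw [norm_sub_branch ha hb hg (F.norm_reps s hs) (mem_closedBall_iff_norm.mpr hts) hu,
    sub_add_cancel_left, norm_neg, div_mul_eq_mul_div, div_eq_inv_mul]
  exact mul_le_mul_of_nonneg_left haθ F.inv_q_pos.le

theorem iUnion_Hnbhd_branch_subset (ha0 : a ≠ 0) (ha : ‖a‖ ≤ 1) (hb : ‖b‖ = F.q)
    (hg : F.IsLip g) {ε : ℝ} (hδ : ‖a‖ / F.q * ε ≤ (F.q : ℝ)⁻¹) :
    ⋃ s ∈ F.reps, Hnbhd (F.branch a b g s) (‖a‖ / F.q * ε) ⊆ F.Tmap a b '' Hnbhd g ε := by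
  intro p hp
  obtain ⟨s, hs, u, θ', hu, hθ', rfl⟩ := Set.mem_iUnion₂.mp hp
  have hs1 := F.norm_reps s hs
  set t := F.branch a b g s u + θ'
  have ht : t ∈ closedBall s (F.q : ℝ)⁻¹ :=
    Hnbhd_branch_subset ha hb hg hs1 hδ ⟨u, θ', hu, hθ', rfl⟩
  have hθ : ‖a⁻¹ * (u - F.psi a b g t)‖ ≤ ε := by
    have hnorm := norm_sub_branch ha hb hg hs1 ht hu
    rw [add_sub_cancel_left] at hnorm
    rw [norm_mul, norm_inv, norm_sub_rev, inv_mul_le_iff₀ (norm_pos_iff.mpr ha0)]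
    calc ‖F.psi a b g t - u‖ = F.q * ‖θ'‖ := by rw [hnorm, mul_inv_cancel_left₀ F.cast_q_pos.ne']
      _ ≤ F.q * (‖a‖ / F.q * ε) := by gcongr
      _ = ‖a‖ * ε := by field_simp [F.cast_q_pos.ne']
  refine ⟨(t, g t + a⁻¹ * (u - F.psi a b g t)),
    ⟨t, _, norm_le_one_of_mem_closedBall hs1 F.inv_q_lt_one.le ht, hθ, rfl⟩, ?_⟩
  rw [Tmap_graph, mul_inv_cancel_left₀ ha0, add_sub_cancel]

end NAField

theorem stmt11 (F : NAField K) (a b : K) (ha0 : a ≠ 0) (ha : ‖a‖ < 1)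
    (hb : ‖b‖ = (F.q : ℝ)) (g : K → K) (hg : F.IsLip g)
    (ε : ℝ) (hε0 : 0 < ε) (hε1 : ε ≤ 1) :
    ∃ gs : K → K → K,
      (∀ s ∈ F.reps, F.IsLip (gs s) ∧
        ∀ t : K, ‖t‖ ≤ 1 → ‖gs s t - s‖ ≤ ((F.q : ℝ))⁻¹) ∧
      (F.Tmap a b '' Hnbhd g ε
          = ⋃ s ∈ F.reps, Hnbhd (gs s) (‖a‖ / (F.q : ℝ) * ε)) ∧
      Set.InjOn (F.Tmap a b) (Hnbhd g ε) ∧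
      (∀ s ∈ F.reps, ∀ s' ∈ F.reps, s ≠ s' →
        Disjoint (Hnbhd (gs s) (‖a‖ / (F.q : ℝ) * ε))
          (Hnbhd (gs s') (‖a‖ / (F.q : ℝ) * ε))) := by
  have := F.isUltrametricDist
  have := F.complete
  have hδ : ‖a‖ / F.q * ε ≤ (F.q : ℝ)⁻¹ := by
    rw [div_mul_eq_mul_div, div_eq_inv_mul]
    exact mul_le_of_le_one_right F.inv_q_pos.le (mul_le_one₀ ha.le hε0.le hε1)
  refine ⟨F.branch a b g, fun s hs => ⟨NAField.isLip_branch ha.le hb hg (F.norm_reps s hs),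
    fun u hu => mem_closedBall_iff_norm.mp
      (NAField.branch_mem_closedBall ha.le hb hg (F.norm_reps s hs) hu)⟩,
    ?_, (F.leftInverse_Tinv_Tmap ha0 b).injective.injOn,
    fun s hs s' hs' hne => NAField.disjoint_Hnbhd_branch ha.le hb hg hs hs' hne hδ⟩
  exact (NAField.Tmap_image_Hnbhd_subset ha.le hb hg hε1).antisymm
    (NAField.iUnion_Hnbhd_branch_subset ha0 ha.le hb hg hδ)
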